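/- arXiv:0904.1361 — 2 statements merged into one kernel-verified Lean document; each statement's English description precedes it below -/
import Mathlib

section
/- Fix μ > 0, V > 0, ξ > 0, integers K ≥ 0 and M ≥ 1, counts n₁,…,n_K ∈ ℕ with s = Σ_{k=1}^K n_k, and θ̄ > 0; set φ = ξMθ̄. For α₀ > 0 let the prior be Gamma with shape α₀ and scale β₀ = μ/α₀ (so that the prior mean is μ and the prior coefficient of variation 1/√α₀ tends to 0 as α₀ → ∞), and put ν(α₀) = α₀ − 1 − Mξ + s and ω(α₀) = VK + α₀/μ. Then lim_{α₀→∞} √(φ/ω(α₀)) · R_{ν(α₀)+1}(2√(ω(α₀) φ)) = μ. -/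
open MeasureTheory ProbabilityTheory Filter

/-- Modified Bessel function of the third kind:
`K_ν(z) = (1/2) ∫₀^∞ u^(ν-1) exp(-z(u+1/u)/2) du`. -/
noncomputable def besselK (ν z : ℝ) : ℝ :=
  (1 / 2) * ∫ u in Set.Ioi (0 : ℝ), u ^ (ν - 1) * Real.exp (-(z * (u + 1 / u)) / 2)

/-- The ratio `R_ν(z) = K_{ν+1}(z) / K_ν(z)`. -/
noncomputable def besselR (ν z : ℝ) : ℝ := besselK (ν + 1) z / besselK ν z

/-!
With `a = α₀ - Mξ + s` and `z = 2√(ωφ)`, the posterior mean is `√(φ/ω) · R_a(z)`.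
Integrating the derivative of `u ↦ u^a e^{-z(u+1/u)/2}` over `(0, ∞)` gives the recurrence
`z K_{a+1} = 2a K_a + z K_{a-1}`, and the substitution `u ↦ 1/u` shows `K_{-ν} = K_ν`, whence
`K_ν` is increasing in `|ν|`. For `a ≥ 1/2` this yields `0 < K_{a-1} ≤ K_a`, so
`2a/z ≤ R_a(z) ≤ 2a/z + 1`, i.e. the posterior mean lies between `a/ω` and `a/ω + √(φ/ω)`.
As `α₀ → ∞`, `a/ω → μ` and `√(φ/ω) → 0`.
-/

open Set Real Topology

noncomputable def besselIntegrand (ν z u : ℝ) : ℝ := u ^ ν * exp (-(z * (u + 1 / u)) / 2)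

lemma besselK_eq_integral (ν z : ℝ) :
    besselK ν z = 1 / 2 * ∫ u in Ioi 0, besselIntegrand (ν - 1) z u := rfl

section

variable {ν z u : ℝ}

lemma besselIntegrand_pos (hu : 0 < u) : 0 < besselIntegrand ν z u := by
  unfold besselIntegrand; positivity

lemma continuousOn_besselIntegrand : ContinuousOn (besselIntegrand ν z) (Ioi 0) := by
  intro u hu
  have hu0 : u ≠ 0 := (mem_Ioi.mp hu).ne'
  exact ((continuousAt_rpow_const u ν (Or.inl hu0)).mul
    (by fun_prop (disch := assumption))).continuousWithinAt

-- `e^{-t} ≤ k!/t^k` at `t = z/(2u)` turns the flat zero of the integrand at `u = 0` into `u^k`.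
lemma besselIntegrand_le (hz : 0 < z) (hu : 0 < u) (k : ℕ) :
    besselIntegrand ν z u ≤ k.factorial * (2 / z) ^ k * (u ^ (ν + k) * exp (-(z / 2) * u)) := by
  have hsplit : exp (-(z * (u + 1 / u)) / 2) = exp (-(z / 2) * u) * exp (-(z / (2 * u))) := by
    rw [← exp_add]; congr 1; field_simp; ring
  have hdecay : exp (-(z / (2 * u))) ≤ k.factorial * (2 / z) ^ k * u ^ k := by
    have := pow_div_factorial_le_exp _ (div_pos hz (mul_pos two_pos hu)).le k
    calc exp (-(z / (2 * u))) = (exp (z / (2 * u)))⁻¹ := exp_neg _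
      _ ≤ ((z / (2 * u)) ^ k / k.factorial)⁻¹ := inv_anti₀ (by positivity) this
      _ = k.factorial * (2 / z) ^ k * u ^ k := by
        rw [inv_div, div_eq_mul_inv, ← inv_pow, inv_div]; ring
  calc besselIntegrand ν z u = u ^ ν * exp (-(z / 2) * u) * exp (-(z / (2 * u))) := by
        rw [besselIntegrand, hsplit, mul_assoc]
    _ ≤ u ^ ν * exp (-(z / 2) * u) * (k.factorial * (2 / z) ^ k * u ^ k) := by gcongr
    _ = k.factorial * (2 / z) ^ k * (u ^ (ν + k) * exp (-(z / 2) * u)) := by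
        rw [rpow_add hu, rpow_natCast]; ring

lemma integrableOn_besselIntegrand (hz : 0 < z) : IntegrableOn (besselIntegrand ν z) (Ioi 0) := by
  set k := ⌈-ν⌉₊
  have hk : -1 < ν + k := by linarith [Nat.le_ceil (-ν)]
  have hdom : IntegrableOn
      (fun u ↦ k.factorial * (2 / z) ^ k * (u ^ (ν + k) * exp (-(z / 2) * u))) (Ioi 0) := by
    have := (integrableOn_rpow_mul_exp_neg_mul_rpow hk one_pos (half_pos hz)).const_mul
      (k.factorial * (2 / z) ^ k)
    simp only [rpow_one] at this
    exact this
  refine hdom.mono' (continuousOn_besselIntegrand.aestronglyMeasurable measurableSet_Ioi) ?_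
  refine (ae_restrict_iff' measurableSet_Ioi).2 (.of_forall fun u (hu : 0 < u) ↦ ?_)
  rw [norm_of_nonneg (besselIntegrand_pos hu).le]
  exact besselIntegrand_le hz hu k

lemma tendsto_besselIntegrand_nhdsGT_zero (hz : 0 < z) :
    Tendsto (besselIntegrand ν z) (𝓝[>] 0) (𝓝 0) := by
  set k := ⌈-ν⌉₊ + 1
  have hk : 0 < ν + k := by push_cast [k]; linarith [Nat.le_ceil (-ν)]
  have hdom : Tendsto (fun u ↦ k.factorial * (2 / z) ^ k * (u ^ (ν + k) * exp (-(z / 2) * u)))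
      (𝓝[>] 0) (𝓝 0) := by
    have : ContinuousAt
        (fun u ↦ k.factorial * (2 / z) ^ k * (u ^ (ν + k) * exp (-(z / 2) * u))) 0 := by
      fun_prop (disch := exact Or.inr hk.le)
    simpa [zero_rpow hk.ne'] using this.tendsto.mono_left nhdsWithin_le_nhds
  exact squeeze_zero' (eventually_nhdsWithin_of_forall fun u hu ↦ (besselIntegrand_pos hu).le)
    (eventually_nhdsWithin_of_forall fun u hu ↦ besselIntegrand_le hz hu k) hdom

lemma tendsto_besselIntegrand_atTop (hz : 0 < z) : Tendsto (besselIntegrand ν z) atTop (𝓝 0) :=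
  squeeze_zero' ((eventually_gt_atTop 0).mono fun _ hu ↦ (besselIntegrand_pos hu).le)
    ((eventually_gt_atTop 0).mono fun _ hu ↦ by simpa using besselIntegrand_le hz hu 0)
    (tendsto_rpow_mul_exp_neg_mul_atTop_nhds_zero ν (z / 2) (half_pos hz))


lemma hasDerivAt_besselIntegrand (hu : 0 < u) :
    HasDerivAt (besselIntegrand ν z) (ν * besselIntegrand (ν - 1) z u
      - z / 2 * besselIntegrand ν z u + z / 2 * besselIntegrand (ν - 2) z u) u := by
  have hpow : HasDerivAt (fun u : ℝ ↦ u ^ ν) (ν * u ^ (ν - 1)) u :=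
    hasDerivAt_rpow_const (Or.inl hu.ne')
  have hexp :
      HasDerivAt (fun u : ℝ ↦ -(z * (u + 1 / u)) / 2) (-(z * (1 - (u ^ 2)⁻¹)) / 2) u := by
    have := ((hasDerivAt_id u).add (hasDerivAt_inv hu.ne')).const_mul z |>.neg.div_const 2
    simpa [one_div, sub_eq_add_neg] using this
  have hsub_two : u ^ (ν - 2) = u ^ ν * (u ^ 2)⁻¹ := by
    rw [rpow_sub hu, rpow_two, div_eq_mul_inv]
  refine (hpow.mul hexp.exp).congr_deriv ?_
  simp only [besselIntegrand, hsub_two]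
  ring

theorem mul_besselK_add_one (hz : 0 < z) (ν : ℝ) :
    z * besselK (ν + 1) z = 2 * ν * besselK ν z + z * besselK (ν - 1) z := by
  have hg := fun μ : ℝ ↦ integrableOn_besselIntegrand (ν := μ) hz
  set F := Function.update (besselIntegrand ν z) 0 0
  have hF0 : ContinuousWithinAt F (Ici 0) 0 := by
    refine continuousWithinAt_update_same.2 ?_
    simpa only [Ici_sdiff_left] using tendsto_besselIntegrand_nhdsGT_zero (ν := ν) hz
  have hFderiv : ∀ u ∈ Ioi (0 : ℝ), HasDerivAt F (ν * besselIntegrand (ν - 1) z u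
      - z / 2 * besselIntegrand ν z u + z / 2 * besselIntegrand (ν - 2) z u) u := by
    intro u (hu : 0 < u)
    refine (hasDerivAt_besselIntegrand hu).congr_of_eventuallyEq ?_
    filter_upwards [Ioi_mem_nhds hu] with x (hx : 0 < x)
    exact Function.update_of_ne hx.ne' _ _
  have hFtop : Tendsto F atTop (𝓝 0) :=
    (tendsto_besselIntegrand_atTop hz).congr' <| (eventually_gt_atTop 0).mono fun x hx ↦
      (Function.update_of_ne hx.ne' _ _).symm
  have hdiff : IntegrableOn
      (fun u ↦ ν * besselIntegrand (ν - 1) z u - z / 2 * besselIntegrand ν z u) (Ioi 0) :=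
    ((hg _).const_mul ν).sub ((hg _).const_mul (z / 2))
  have hFTC := integral_Ioi_of_hasDerivAt_of_tendsto hF0 hFderiv
    (hdiff.add ((hg _).const_mul (z / 2))) hFtop
  rw [integral_add hdiff ((hg _).const_mul (z / 2)),
    integral_sub ((hg _).const_mul ν) ((hg _).const_mul _),
    integral_const_mul, integral_const_mul, integral_const_mul] at hFTC
  simp only [F, Function.update_self, sub_zero] at hFTC
  rw [besselK_eq_integral, besselK_eq_integral, besselK_eq_integral, add_sub_cancel_right, sub_sub,
    show (1 : ℝ) + 1 = 2 by norm_num]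
  linarith

lemma besselIntegrand_inv (hu : 0 < u) :
    u ^ (-2 : ℝ) * besselIntegrand ν z u⁻¹ = besselIntegrand (-ν - 2) z u := by
  rw [besselIntegrand, besselIntegrand, inv_rpow hu.le, ← rpow_neg hu.le, ← mul_assoc,
    ← rpow_add hu, one_div, one_div, inv_inv, add_comm u⁻¹]
  ring_nf

theorem besselK_neg (ν z : ℝ) : besselK (-ν) z = besselK ν z := by
  rw [besselK_eq_integral, besselK_eq_integral,
    ← integral_comp_rpow_Ioi (besselIntegrand (ν - 1) z) (p := -1) (by norm_num)]
  congr 1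
  refine setIntegral_congr_fun measurableSet_Ioi fun u (hu : 0 < u) ↦ ?_
  rw [smul_eq_mul, abs_neg, abs_one, one_mul, rpow_neg_one, show (-1 : ℝ) - 1 = -2 by norm_num,
    besselIntegrand_inv hu]
  ring_nf

lemma rpow_add_rpow_neg_le_of_abs_le {a b : ℝ} (hu : 0 < u) (h : |a| ≤ |b|) :
    u ^ a + u ^ (-a) ≤ u ^ b + u ^ (-b) := by
  have hcosh : ∀ c, u ^ c + u ^ (-c) = 2 * cosh (log u * c) := fun c ↦ by
    rw [rpow_def_of_pos hu, rpow_def_of_pos hu, cosh_eq, mul_neg]; ring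
  rw [hcosh, hcosh, mul_le_mul_iff_right₀ two_pos, cosh_le_cosh, abs_mul, abs_mul]
  exact mul_le_mul_of_nonneg_left h (abs_nonneg _)

theorem besselK_le_of_abs_le {ν' : ℝ} (hz : 0 < z) (h : |ν| ≤ |ν'|) :
    besselK ν z ≤ besselK ν' z := by
  have hg := fun μ : ℝ ↦ integrableOn_besselIntegrand (ν := μ) hz
  have hsymm : ∀ μ, 4 * besselK μ z =
      ∫ u in Ioi 0, besselIntegrand (μ - 1) z u + besselIntegrand (-μ - 1) z u := fun μ ↦ by
    have hneg := besselK_neg μ z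
    rw [besselK_eq_integral, besselK_eq_integral] at hneg
    rw [integral_add (hg _) (hg _), besselK_eq_integral]
    linarith
  suffices 4 * besselK ν z ≤ 4 * besselK ν' z by linarith
  rw [hsymm, hsymm]
  refine setIntegral_mono_on ((hg _).add (hg _)) ((hg _).add (hg _)) measurableSet_Ioi
    fun u (hu : 0 < u) ↦ ?_
  have hsplit : ∀ μ, besselIntegrand (μ - 1) z u + besselIntegrand (-μ - 1) z u
      = (u ^ μ + u ^ (-μ)) * (besselIntegrand 0 z u / u) := fun μ ↦ by
    simp only [besselIntegrand, rpow_sub hu, rpow_one, rpow_zero]; ring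
  rw [hsplit, hsplit]
  exact mul_le_mul_of_nonneg_right (rpow_add_rpow_neg_le_of_abs_le hu h)
    (div_pos (besselIntegrand_pos hu) hu).le

lemma besselK_pos (hz : 0 < z) (ν : ℝ) : 0 < besselK ν z := by
  rw [besselK_eq_integral]
  refine mul_pos one_half_pos ?_
  have hsupp : Function.support (fun u ↦ besselIntegrand (ν - 1) z u) ∩ Ioi 0 = Ioi 0 :=
    inter_eq_right.2 fun u hu ↦ (besselIntegrand_pos hu).ne'
  rw [setIntegral_pos_iff_support_of_nonneg_ae
    ((ae_restrict_iff' measurableSet_Ioi).2 (.of_forall fun u hu ↦ (besselIntegrand_pos hu).le))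
    (integrableOn_besselIntegrand hz), hsupp, volume_Ioi]
  exact ENNReal.zero_lt_top

theorem two_mul_div_le_besselR (hz : 0 < z) (ν : ℝ) : 2 * ν / z ≤ besselR ν z := by
  rw [besselR, div_le_div_iff₀ hz (besselK_pos hz ν)]
  linarith [mul_besselK_add_one hz ν, mul_pos hz (besselK_pos hz (ν - 1))]

theorem besselR_le_two_mul_div_add_one (hz : 0 < z) (hν : 1 / 2 ≤ ν) :
    besselR ν z ≤ 2 * ν / z + 1 := by
  have hK : besselK (ν - 1) z ≤ besselK ν z := by
    refine besselK_le_of_abs_le hz ?_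
    rw [abs_of_pos (by linarith : 0 < ν)]
    exact abs_le.2 ⟨by linarith, by linarith⟩
  rw [besselR, div_le_iff₀ (besselK_pos hz ν)]
  refine le_of_mul_le_mul_left ?_ hz
  calc z * besselK (ν + 1) z = 2 * ν * besselK ν z + z * besselK (ν - 1) z :=
        mul_besselK_add_one hz ν
    _ ≤ 2 * ν * besselK ν z + z * besselK ν z := by gcongr
    _ = z * ((2 * ν / z + 1) * besselK ν z) := by field_simp

end

lemma sqrt_div_mul_div_two_mul_sqrt {ω φ : ℝ} (hω : 0 < ω) (hφ : 0 < φ) (ν : ℝ) :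
    √(φ / ω) * (2 * ν / (2 * √(ω * φ))) = ν / ω := by
  rw [sqrt_div' _ hω.le, sqrt_mul hω.le]
  have := sqrt_pos.2 hω
  have := sqrt_pos.2 hφ
  field_simp
  rw [sq_sqrt hω.le, mul_comm]

theorem tendsto_sqrt_div_mul_besselR {ι : Type*} {l : Filter ι} {ν ω : ι → ℝ} {φ m : ℝ}
    (hφ : 0 < φ) (hω : Tendsto ω l atTop) (hν : ∀ᶠ i in l, 1 / 2 ≤ ν i)
    (hνω : Tendsto (fun i ↦ ν i / ω i) l (𝓝 m)) :
    Tendsto (fun i ↦ √(φ / ω i) * besselR (ν i) (2 * √(ω i * φ))) l (𝓝 m) := by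
  have hsqrt : Tendsto (fun i ↦ √(φ / ω i)) l (𝓝 0) := by
    simpa using (tendsto_const_nhds.div_atTop hω).sqrt
  refine tendsto_of_tendsto_of_tendsto_of_le_of_le' hνω (by simpa using hνω.add hsqrt) ?_ ?_
  all_goals
    filter_upwards [hω.eventually_gt_atTop 0, hν] with i hωi hνi
    have hz : 0 < 2 * √(ω i * φ) := by positivity
  · calc ν i / ω i = √(φ / ω i) * (2 * ν i / (2 * √(ω i * φ))) :=
          (sqrt_div_mul_div_two_mul_sqrt hωi hφ _).symm
      _ ≤ _ := by gcongr; exact two_mul_div_le_besselR hz _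
  · calc √(φ / ω i) * besselR (ν i) (2 * √(ω i * φ))
        ≤ √(φ / ω i) * (2 * ν i / (2 * √(ω i * φ)) + 1) := by
          gcongr; exact besselR_le_two_mul_div_add_one hz hνi
      _ = ν i / ω i + √(φ / ω i) := by
          rw [mul_add, sqrt_div_mul_div_two_mul_sqrt hωi hφ, mul_one]

lemma tendsto_add_div_add_div_atTop {μ : ℝ} (hμ : μ ≠ 0) (c d : ℝ) :
    Tendsto (fun x ↦ (x + c) / (d + x / μ)) atTop (𝓝 μ) := by
  have hlim :
      Tendsto (fun x ↦ μ * (1 + (c - μ * d) / (x + μ * d))) atTop (𝓝 (μ * (1 + 0))) :=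
    tendsto_const_nhds.mul (tendsto_const_nhds.add (tendsto_const_nhds.div_atTop
      (tendsto_atTop_add_const_right _ _ tendsto_id)))
  rw [add_zero, mul_one] at hlim
  refine hlim.congr' ((eventually_gt_atTop (-(μ * d))).mono fun x hx ↦ ?_)
  have hx' : x + μ * d ≠ 0 := by linarith
  dsimp only
  rw [show d + x / μ = (x + μ * d) / μ by field_simp; ring]
  field_simp
  ring

theorem posterior_mean_tendsto_of_precise_prior_general
    (μ V ξ θbar : ℝ) (hμ : 0 < μ) (hξ : 0 < ξ) (hθbar : 0 < θbar)
    (K M : ℕ) (hM : 1 ≤ M)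
    (s φ : ℝ) (hφ : φ = ξ * M * θbar) :
    Tendsto (fun α₀ : ℝ =>
        Real.sqrt (φ / (V * K + α₀ / μ)) *
          besselR ((α₀ - 1 - M * ξ + s) + 1) (2 * Real.sqrt ((V * K + α₀ / μ) * φ)))
      atTop (nhds μ) := by
  have hφ0 : 0 < φ := by
    have : (0 : ℝ) < M := by exact_mod_cast hM
    rw [hφ]; positivity
  have hω : Tendsto (fun α₀ : ℝ ↦ V * K + α₀ / μ) atTop atTop :=
    tendsto_atTop_add_const_left _ _ (tendsto_id.atTop_div_const hμ)
  have hν : ∀ᶠ α₀ : ℝ in atTop, 1 / 2 ≤ (α₀ - 1 - M * ξ + s) + 1 :=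
    (eventually_ge_atTop (1 / 2 + M * ξ - s)).mono fun _ h ↦ by linarith
  refine tendsto_sqrt_div_mul_besselR hφ0 hω hν ?_
  exact (tendsto_add_div_add_div_atTop hμ.ne' (s - M * ξ) (V * K)).congr fun _ ↦ by ring_nf

/-- **Theorem 2e: vanishing coefficient of variation of the prior.**
Keeping the prior mean `μ = α₀β₀` fixed and letting the prior coefficient of variation
`1/√α₀` tend to 0 (i.e. `α₀ → ∞`, `β₀ = μ/α₀`), the posterior mean of the Poisson
intensity converges to the prior mean `μ`. -/
theorem posterior_mean_tendsto_of_precise_prior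
    (μ V ξ θbar : ℝ) (hμ : 0 < μ) (hV : 0 < V) (hξ : 0 < ξ) (hθbar : 0 < θbar)
    (K M : ℕ) (hM : 1 ≤ M) (n : Fin K → ℕ)
    (s φ : ℝ) (hs : s = ∑ k, (n k : ℝ)) (hφ : φ = ξ * M * θbar) :
    Tendsto (fun α₀ : ℝ =>
        Real.sqrt (φ / (V * K + α₀ / μ)) *
          besselR ((α₀ - 1 - M * ξ + s) + 1) (2 * Real.sqrt ((V * K + α₀ / μ) * φ)))
      atTop (nhds μ) :=
  posterior_mean_tendsto_of_precise_prior_general μ V ξ θbar hμ hξ hθbar K M hM s φ hφ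
end

section
/- Fix ν₀ ∈ ℝ, ω₀ > 0, φ₀ ≥ 0, ξ > 0, L > 0, integers K ≥ 0 and M ≥ 0, losses x₁,…,x_K with x_k ≥ L for all k, and expert opinions θ₁,…,θ_M > 0. Set ν = ν₀ − Mξ + K, ω = ω₀ + Σ_{k=1}^K log(x_k/L) and φ = φ₀ + ξ·Σ_{m=1}^M θ_m. Then there exists c > 0 such that for every γ > 0, γ^{ν₀} exp(−ω₀γ − φ₀/γ) · ∏_{k=1}^K (γ/L)(x_k/L)^{−(γ+1)} · ∏_{m=1}^M [θ_m^{ξ−1} e^{−θ_m ξ/γ}/((γ/ξ)^ξ Γ(ξ))] = c · γ^ν exp(−ωγ − φ/γ); that is, in the Pareto–Gamma–GIG model with GIG(ν₀,ω₀,φ₀) prior, the posterior of the Pareto tail index is again generalized inverse Gaussian with the updated parameters ν, ω, φ. -/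
/-!
On `γ > 0` the kernel `γ ^ ν * exp (-(ω * γ) - φ / γ)` equals `exp (ν log γ - ω γ - φ / γ)`, which is
linear in `(ν, ω, φ)`; products of such kernels therefore add their parameters. Each Pareto
likelihood factor is a constant times the kernel with parameters `(1, log (x / L), 0)` and each
Gamma expert factor a constant times the kernel with parameters `(-ξ, 0, ξ θ)`, so the posterior is
a constant times the kernel with the summed parameters.
-/

open MeasureTheory ProbabilityTheory Filter

open Finset

noncomputable def gigKernel (ν ω φ γ : ℝ) : ℝ :=
  γ ^ ν * Real.exp (-(ω * γ) - φ / γ)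

theorem gigKernel_eq_exp {γ : ℝ} (hγ : 0 < γ) (ν ω φ : ℝ) :
    gigKernel ν ω φ γ = Real.exp (ν * Real.log γ - ω * γ - φ / γ) := by
  rw [gigKernel, Real.rpow_def_of_pos hγ, ← Real.exp_add]
  ring_nf

theorem gigKernel_mul {γ : ℝ} (hγ : 0 < γ) (ν ω φ ν' ω' φ' : ℝ) :
    gigKernel ν ω φ γ * gigKernel ν' ω' φ' γ = gigKernel (ν + ν') (ω + ω') (φ + φ') γ := by
  simp only [gigKernel_eq_exp hγ, ← Real.exp_add]
  ring_nf

theorem prod_gigKernel {ι : Type*} (s : Finset ι) {γ : ℝ} (hγ : 0 < γ) (ν ω φ : ι → ℝ) :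
    ∏ i ∈ s, gigKernel (ν i) (ω i) (φ i) γ =
      gigKernel (∑ i ∈ s, ν i) (∑ i ∈ s, ω i) (∑ i ∈ s, φ i) γ := by
  simp only [gigKernel_eq_exp hγ, ← Real.exp_sum, sum_sub_distrib, sum_mul, sum_div]

theorem pareto_likelihood_eq_mul_gigKernel {a : ℝ} (ha : 0 < a) (γ L : ℝ) :
    γ / L * a ^ (-(γ + 1)) = a⁻¹ / L * gigKernel 1 (Real.log a) 0 γ := by
  rw [gigKernel, Real.rpow_one, zero_div, sub_zero, neg_add, Real.rpow_add ha,
    Real.rpow_neg_one, Real.rpow_def_of_pos ha]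
  ring_nf

theorem gamma_likelihood_eq_mul_gigKernel {ξ γ : ℝ} (hξ : 0 < ξ) (hγ : 0 < γ) (θ : ℝ) :
    θ ^ (ξ - 1) * Real.exp (-(θ * ξ) / γ) / ((γ / ξ) ^ ξ * Real.Gamma ξ) =
      θ ^ (ξ - 1) * ξ ^ ξ / Real.Gamma ξ * gigKernel (-ξ) 0 (ξ * θ) γ := by
  have hΓ : Real.Gamma ξ ≠ 0 := (Real.Gamma_pos_of_pos hξ).ne'
  have hγξ : γ ^ ξ ≠ 0 := (Real.rpow_pos_of_pos hγ ξ).ne'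
  rw [gigKernel, Real.div_rpow hγ.le hξ.le, Real.rpow_neg hγ.le, zero_mul, neg_zero, zero_sub,
    neg_div, mul_comm ξ θ]
  field_simp

theorem pareto_gamma_GIG_posterior_is_GIG_general
    (ν₀ ω₀ φ₀ ξ L : ℝ) (hξ : 0 < ξ) (hL : 0 < L)
    (K M : ℕ) (x : Fin K → ℝ) (hx : ∀ k, L ≤ x k)
    (θ : Fin M → ℝ) (hθ : ∀ m, 0 < θ m)
    (ν ω φ : ℝ)
    (hν : ν = ν₀ - M * ξ + K)
    (hω : ω = ω₀ + ∑ k, Real.log (x k / L))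
    (hφ : φ = φ₀ + ξ * ∑ m, θ m) :
    ∃ c : ℝ, 0 < c ∧ ∀ γ : ℝ, 0 < γ →
      (γ ^ ν₀ * Real.exp (-(ω₀ * γ) - φ₀ / γ)) *
        (∏ k, γ / L * (x k / L) ^ (-(γ + 1))) *
        (∏ m, θ m ^ (ξ - 1) * Real.exp (-(θ m * ξ) / γ) / ((γ / ξ) ^ ξ * Real.Gamma ξ)) =
      c * (γ ^ ν * Real.exp (-(ω * γ) - φ / γ)) := by
  have hxL : ∀ k, 0 < x k / L := fun k => div_pos (hL.trans_le (hx k)) hL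
  have hΓ := Real.Gamma_pos_of_pos hξ
  refine ⟨(∏ k, (x k / L)⁻¹ / L) * ∏ m, θ m ^ (ξ - 1) * ξ ^ ξ / Real.Gamma ξ, ?_, fun γ hγ => ?_⟩
  · exact mul_pos (prod_pos fun k _ => by have := hxL k; positivity)
      (prod_pos fun m _ => by have := hθ m; positivity)
  have hlosses : ∏ k, γ / L * (x k / L) ^ (-(γ + 1)) =
      (∏ k, (x k / L)⁻¹ / L) * gigKernel K (∑ k, Real.log (x k / L)) 0 γ := by
    rw [prod_congr rfl fun k _ => pareto_likelihood_eq_mul_gigKernel (hxL k) γ L,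
      prod_mul_distrib, prod_gigKernel _ hγ]
    simp
  have hexperts : ∏ m, θ m ^ (ξ - 1) * Real.exp (-(θ m * ξ) / γ) / ((γ / ξ) ^ ξ * Real.Gamma ξ) =
      (∏ m, θ m ^ (ξ - 1) * ξ ^ ξ / Real.Gamma ξ) * gigKernel (-(M * ξ)) 0 (ξ * ∑ m, θ m) γ := by
    rw [prod_congr rfl fun m _ => gamma_likelihood_eq_mul_gigKernel hξ hγ (θ m),
      prod_mul_distrib, prod_gigKernel _ hγ]
    simp [mul_sum]
  have hposterior : gigKernel ν ω φ γ = gigKernel ν₀ ω₀ φ₀ γ *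
      gigKernel K (∑ k, Real.log (x k / L)) 0 γ * gigKernel (-(M * ξ)) 0 (ξ * ∑ m, θ m) γ := by
    rw [gigKernel_mul hγ, gigKernel_mul hγ, hν, hω, hφ]
    congr 1 <;> ring
  change gigKernel ν₀ ω₀ φ₀ γ * _ * _ = _ * gigKernel ν ω φ γ
  rw [hlosses, hexperts, hposterior]
  ring

/-- **Pareto–Gamma–GIG posterior, Model 5.**
With a GIG(ν₀,ω₀,φ₀) prior on the Pareto tail index, Pareto(γ,L) losses and Gamma(ξ,γ/ξ)
expert opinions, the posterior is again GIG with updated parameters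
`ν = ν₀ - Mξ + K`, `ω = ω₀ + Σ log(x_k/L)`, `φ = φ₀ + ξ Σ θ_m`. -/
theorem pareto_gamma_GIG_posterior_is_GIG
    (ν₀ ω₀ φ₀ ξ L : ℝ) (hω₀ : 0 < ω₀) (hφ₀ : 0 ≤ φ₀) (hξ : 0 < ξ) (hL : 0 < L)
    (K M : ℕ) (x : Fin K → ℝ) (hx : ∀ k, L ≤ x k)
    (θ : Fin M → ℝ) (hθ : ∀ m, 0 < θ m)
    (ν ω φ : ℝ)
    (hν : ν = ν₀ - M * ξ + K)
    (hω : ω = ω₀ + ∑ k, Real.log (x k / L))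
    (hφ : φ = φ₀ + ξ * ∑ m, θ m) :
    ∃ c : ℝ, 0 < c ∧ ∀ γ : ℝ, 0 < γ →
      (γ ^ ν₀ * Real.exp (-(ω₀ * γ) - φ₀ / γ)) *
        (∏ k, γ / L * (x k / L) ^ (-(γ + 1))) *
        (∏ m, θ m ^ (ξ - 1) * Real.exp (-(θ m * ξ) / γ) / ((γ / ξ) ^ ξ * Real.Gamma ξ)) =
      c * (γ ^ ν * Real.exp (-(ω * γ) - φ / γ)) :=
  pareto_gamma_GIG_posterior_is_GIG_general ν₀ ω₀ φ₀ ξ L hξ hL K M x hx θ hθ ν ω φ hν hω hφ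
end
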